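/- arXiv:1805.00616 — 3 statements merged into one kernel-verified Lean document; each statement's English description precedes it below -/
import Mathlib

section
/- Let ŵ be any minimizer over W of the truncated empirical risk R̂_{ψ∘ℓ1}, and let w* be any minimizer over W of R_{ℓ1}. Then for every ε > 0 and every 0 < δ < 1/2, with probability at least 1 − 2δ over the i.i.d. sample, R_{ℓ1}(ŵ) − R_{ℓ1}(w*) ≤ 2ε·E[‖x‖] + α·ε²·E[‖x‖²] + (3α/2)·sup_{w∈W} R_{ℓ2}(w) + (1/(nα))·log(N(W,ε)/δ²). -/
open MeasureTheory Real

/-- The ℓ1-risk `R_{ℓ1}(w) = E_{(x,y)∼P}[|y − ⟨x,w⟩|]`. -/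
noncomputable def l1Risk {H : Type*} [NormedAddCommGroup H] [InnerProductSpace ℝ H]
    [MeasurableSpace H] (P : Measure (H × ℝ)) (w : H) : ℝ :=
  ∫ z, |z.2 - (inner ℝ z.1 w : ℝ)| ∂P

/-- The ℓ2-risk `R_{ℓ2}(w) = E_{(x,y)∼P}[(y − ⟨x,w⟩)²]`. -/
noncomputable def l2Risk {H : Type*} [NormedAddCommGroup H] [InnerProductSpace ℝ H]
    [MeasurableSpace H] (P : Measure (H × ℝ)) (w : H) : ℝ :=
  ∫ z, (z.2 - (inner ℝ z.1 w : ℝ)) ^ 2 ∂P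

/-- The truncated empirical risk `R̂_{ψ∘ℓ1}(w) = (1/(nα)) Σ_i ψ(α|y_i − ⟨x_i,w⟩|)`. -/
noncomputable def truncEmpRisk {H : Type*} [NormedAddCommGroup H] [InnerProductSpace ℝ H]
    (ψ : ℝ → ℝ) (α : ℝ) (n : ℕ) (ω : Fin n → H × ℝ) (w : H) : ℝ :=
  (1 / (n * α)) * ∑ i, ψ (α * |(ω i).2 - (inner ℝ (ω i).1 w : ℝ)|)

/-- The covering number `N(W, ε)`: the minimal cardinality of a finite ε-net of `W`
consisting of points of `W`. -/
noncomputable def coveringNumber {H : Type*} [NormedAddCommGroup H] (W : Set H) (ε : ℝ) : ℕ :=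
  sInf {k | ∃ N : Finset H, ↑N ⊆ W ∧ N.card = k ∧ ∀ w ∈ W, ∃ v ∈ N, ‖w - v‖ ≤ ε}

/-!
Catoni's argument. Since `exp (ψ x) ≤ 1 + x + x²/2`, the exponential moment of `∑ ψ (α X_i)` is at
most `exp (n (α E X + α² E X² / 2))`, so by Markov's inequality the truncated empirical mean
`(1/(nα)) ∑ ψ (α X_i)` exceeds `E X + α E X² / 2 + t/(nα)` with probability at most `e^{-t}`;
the reflection `x ↦ -ψ (-x)` gives the symmetric lower deviation. Apply the upper deviation to the
loss of `w*`, and the lower one, with a union bound, to the shifted losses `|y - ⟨x, v⟩| - ε‖x‖` of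
the points `v` of a minimal ε-net. For the net point `v` next to `ŵ` the shifted loss lies below the
loss of `ŵ`, so monotonicity of `ψ` and minimality of `ŵ` squeeze the truncated empirical risk of `ŵ`
between the two bounds, and `R(ŵ) ≤ R(v) + ε E‖x‖` turns this into the excess-risk bound.
-/

open Finset

section Catoni

variable {Z : Type*}

noncomputable def catoniMean (ψ : ℝ → ℝ) (α : ℝ) {n : ℕ} (X : Z → ℝ) (ω : Fin n → Z) : ℝ :=
  1 / (n * α) * ∑ i, ψ (α * X (ω i))

theorem catoniMean_mono {ψ : ℝ → ℝ} (hψ : Monotone ψ) {α : ℝ} (hα : 0 ≤ α) {n : ℕ}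
    {X Y : Z → ℝ} {ω : Fin n → Z} (h : ∀ i, X (ω i) ≤ Y (ω i)) :
    catoniMean ψ α X ω ≤ catoniMean ψ α Y ω := by
  unfold catoniMean
  gcongr with i
  exact hψ (mul_le_mul_of_nonneg_left (h i) hα)

variable [MeasurableSpace Z] {P : Measure Z}

theorem measure_pi_sum_ge_le_exp_neg {ι : Type*} [Fintype ι] [IsProbabilityMeasure P]
    {h : Z → ℝ} {c : ℝ} (hint : Integrable (fun z => exp (h z)) P)
    (hc : ∫ z, exp (h z) ∂P ≤ exp c) (t : ℝ) :
    Measure.pi (fun _ : ι => P) {ω | Fintype.card ι * c + t ≤ ∑ i, h (ω i)} ≤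
      ENNReal.ofReal (exp (-t)) := by
  have hprod : ∀ ω : ι → Z, exp (1 * ∑ i, h (ω i)) = ∏ i, exp (h (ω i)) := fun ω => by
    rw [one_mul, exp_sum]
  have hint' : Integrable (fun ω => exp (1 * ∑ i, h (ω i))) (Measure.pi fun _ : ι => P) := by
    simpa only [hprod] using Integrable.fintype_prod fun _ : ι => hint
  have hmgf : ProbabilityTheory.mgf (fun ω => ∑ i, h (ω i)) (Measure.pi fun _ : ι => P) 1 ≤ exp (Fintype.card ι * c) := by
    rw [ProbabilityTheory.mgf]
    simp_rw [hprod]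
    rw [integral_fintype_prod_eq_pow (fun z => exp (h z)), exp_nat_mul]
    exact pow_le_pow_left₀ (integral_nonneg fun z => (exp_pos _).le) hc _
  rw [ENNReal.le_ofReal_iff_toReal_le (measure_ne_top _ _) (exp_pos _).le]
  calc (Measure.pi fun _ : ι => P).real _ ≤ exp (-1 * (Fintype.card ι * c + t)) * ProbabilityTheory.mgf (fun ω => ∑ i, h (ω i)) (Measure.pi fun _ : ι => P) 1 :=
        ProbabilityTheory.measure_ge_le_exp_mul_mgf _ zero_le_one hint'
    _ ≤ exp (-1 * (Fintype.card ι * c + t)) * exp (Fintype.card ι * c) := by gcongr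
    _ = exp (-t) := by rw [← exp_add]; ring_nf

variable [IsProbabilityMeasure P] {ψ : ℝ → ℝ} {X : Z → ℝ} {α : ℝ} {n : ℕ}

theorem measure_pi_catoniMean_ge_le (hψ : Measurable ψ)
    (hψub : ∀ x, ψ x ≤ log (1 + x + x ^ 2 / 2)) (hX : MemLp X 2 P) (hα : 0 < α) (hn : 0 < n)
    (t : ℝ) :
    Measure.pi (fun _ : Fin n => P)
      {ω | ∫ z, X z ∂P + α * (∫ z, X z ^ 2 ∂P) / 2 + 1 / (n * α) * t ≤ catoniMean ψ α X ω} ≤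
      ENNReal.ofReal (exp (-t)) := by
  have hX1 : Integrable X P := hX.integrable one_le_two
  have hlin : Integrable (fun z => 1 + α * X z) P := (integrable_const 1).add (hX1.const_mul α)
  have hquad : Integrable (fun z => α ^ 2 / 2 * X z ^ 2) P := hX.integrable_sq.const_mul _
  have hdom : Integrable (fun z => 1 + α * X z + α ^ 2 / 2 * X z ^ 2) P := hlin.add hquad
  have hexp : ∀ z, exp (ψ (α * X z)) ≤ 1 + α * X z + α ^ 2 / 2 * X z ^ 2 := fun z => by
    have hq : 0 < 1 + α * X z + (α * X z) ^ 2 / 2 := by nlinarith [sq_nonneg (α * X z + 1)]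
    have := (le_log_iff_exp_le hq).1 (hψub (α * X z))
    linarith [mul_pow α (X z) 2]
  have hint : Integrable (fun z => exp (ψ (α * X z))) P :=
    hdom.mono' (hψ.comp_aemeasurable (hX1.aemeasurable.const_mul α)).exp.aestronglyMeasurable
      (ae_of_all _ fun z => by rw [norm_of_nonneg (exp_pos _).le]; exact hexp z)
  have hc : ∫ z, exp (ψ (α * X z)) ∂P ≤ exp (α * ∫ z, X z ∂P + α ^ 2 * (∫ z, X z ^ 2 ∂P) / 2) :=
    calc ∫ z, exp (ψ (α * X z)) ∂P ≤ ∫ z, (1 + α * X z + α ^ 2 / 2 * X z ^ 2) ∂P :=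
          integral_mono hint hdom hexp
      _ = α * ∫ z, X z ∂P + α ^ 2 * (∫ z, X z ^ 2 ∂P) / 2 + 1 := by
          rw [integral_add hlin hquad, integral_add (integrable_const 1) (hX1.const_mul α),
            integral_const_mul, integral_const_mul]
          simp only [integral_const, probReal_univ, smul_eq_mul, one_mul]
          ring
      _ ≤ _ := add_one_le_exp _
  refine (measure_mono fun ω hω => ?_).trans (measure_pi_sum_ge_le_exp_neg hint hc t)
  have hnα : 0 < (n : ℝ) * α := by positivity
  simp only [Set.mem_ofPred_eq, catoniMean, Fintype.card_fin] at hω ⊢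
  have := mul_le_mul_of_nonneg_left hω hnα.le
  field_simp at this
  linarith

theorem measure_pi_catoniMean_le_le (hψ : Measurable ψ)
    (hψlb : ∀ x, -log (1 - x + x ^ 2 / 2) ≤ ψ x) (hX : MemLp X 2 P) (hα : 0 < α) (hn : 0 < n)
    (t : ℝ) :
    Measure.pi (fun _ : Fin n => P)
      {ω | catoniMean ψ α X ω ≤ ∫ z, X z ∂P - α * (∫ z, X z ^ 2 ∂P) / 2 - 1 / (n * α) * t} ≤
      ENNReal.ofReal (exp (-t)) := by
  -- the lower bound on `ψ` is the upper bound on its reflection `x ↦ -ψ (-x)`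
  have hub : ∀ x, -ψ (-x) ≤ log (1 + x + x ^ 2 / 2) := fun x => by
    have := hψlb (-x)
    rw [neg_sq, sub_neg_eq_add] at this
    linarith
  refine (measure_mono fun ω hω => ?_).trans (measure_pi_catoniMean_ge_le
    (ψ := fun x => -ψ (-x)) (hψ.comp measurable_neg).neg hub hX.neg hα hn t)
  have hmean : catoniMean (fun x => -ψ (-x)) α (-X) ω = -catoniMean ψ α X ω := by
    simp only [catoniMean, Pi.neg_apply, mul_neg, neg_neg, sum_neg_distrib, mul_neg]
  simp only [Set.mem_ofPred_eq, hmean, Pi.neg_apply, neg_sq, integral_neg] at hω ⊢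
  linarith

end Catoni

theorem integral_sub_sq_le_of_nonneg {Z : Type*} [MeasurableSpace Z] {P : Measure Z}
    {f g : Z → ℝ} (hf : MemLp f 2 P) (hg : MemLp g 2 P) (hf0 : 0 ≤ f) (hg0 : 0 ≤ g) :
    ∫ z, (f z - g z) ^ 2 ∂P ≤ ∫ z, f z ^ 2 ∂P + ∫ z, g z ^ 2 ∂P := by
  rw [← integral_add hf.integrable_sq hg.integrable_sq]
  exact integral_mono (hf.sub hg).integrable_sq (hf.integrable_sq.add hg.integrable_sq)
    fun z => by nlinarith [mul_nonneg (hf0 z) (hg0 z)]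

section L1Loss

variable {H : Type*} [NormedAddCommGroup H] [InnerProductSpace ℝ H]

noncomputable def l1Loss (w : H) (z : H × ℝ) : ℝ :=
  |z.2 - (inner ℝ z.1 w : ℝ)|

theorem abs_l1Loss_sub_l1Loss_le {w v : H} {ε : ℝ} (h : ‖w - v‖ ≤ ε) (z : H × ℝ) :
    |l1Loss w z - l1Loss v z| ≤ ε * ‖z.1‖ :=
  calc |l1Loss w z - l1Loss v z|
      ≤ |(z.2 - (inner ℝ z.1 w : ℝ)) - (z.2 - (inner ℝ z.1 v : ℝ))| :=
        abs_abs_sub_abs_le_abs_sub _ _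
    _ = |(inner ℝ z.1 (w - v) : ℝ)| := by rw [inner_sub_right, abs_sub_comm]; ring_nf
    _ ≤ ‖z.1‖ * ‖w - v‖ := abs_real_inner_le_norm _ _
    _ ≤ ε * ‖z.1‖ := by rw [mul_comm]; gcongr

theorem truncEmpRisk_eq_catoniMean (ψ : ℝ → ℝ) (α : ℝ) {n : ℕ} (ω : Fin n → H × ℝ) (w : H) :
    truncEmpRisk ψ α n ω w = catoniMean ψ α (l1Loss w) ω :=
  rfl

variable [MeasurableSpace H] {P : Measure (H × ℝ)}

theorem measurable_l1Loss [BorelSpace H] (w : H) : Measurable (l1Loss w) :=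
  (measurable_snd.sub (continuous_fst.inner continuous_const).measurable).abs

theorem memLp_l1Loss [BorelSpace H] {w : H}
    (h : Integrable (fun z : H × ℝ => (z.2 - (inner ℝ z.1 w : ℝ)) ^ 2) P) :
    MemLp (l1Loss w) 2 P :=
  (memLp_two_iff_integrable_sq (measurable_l1Loss w).aestronglyMeasurable).2 <| by
    simpa only [l1Loss, sq_abs] using h

theorem integral_l1Loss (w : H) : ∫ z, l1Loss w z ∂P = l1Risk P w :=
  rfl

theorem integral_l1Loss_sq (w : H) : ∫ z, l1Loss w z ^ 2 ∂P = l2Risk P w := by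
  simp only [l1Loss, sq_abs, l2Risk]

theorem l1Risk_le_add_of_norm_sub_le {w v : H} {ε : ℝ} (hw : Integrable (l1Loss w) P)
    (hv : Integrable (l1Loss v) P) (hx : Integrable (fun z : H × ℝ => ‖z.1‖) P)
    (h : ‖w - v‖ ≤ ε) :
    l1Risk P w ≤ l1Risk P v + ε * ∫ z, ‖z.1‖ ∂P :=
  calc l1Risk P w ≤ ∫ z, (l1Loss v z + ε * ‖z.1‖) ∂P :=
        integral_mono hw (hv.add (hx.const_mul ε)) fun z =>
          (sub_le_iff_le_add'.1 (abs_le.1 (abs_l1Loss_sub_l1Loss_le h z)).2)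
    _ = l1Risk P v + ε * ∫ z, ‖z.1‖ ∂P := by
        rw [integral_add hv (hx.const_mul ε), integral_const_mul]; rfl

theorem l1Risk_sub_l1Risk_le_of_catoniMean {ψ : ℝ → ℝ} (hψ : Monotone ψ) {α : ℝ} (hα : 0 ≤ α)
    {n : ℕ} {ω : Fin n → H × ℝ} {w w' v : H} {ε s s' : ℝ} (hw : Integrable (l1Loss w) P)
    (hv : Integrable (l1Loss v) P) (hx : Integrable (fun z : H × ℝ => ‖z.1‖) P)
    (hwv : ‖w - v‖ ≤ ε) (hmin : catoniMean ψ α (l1Loss w) ω ≤ catoniMean ψ α (l1Loss w') ω)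
    (hup : catoniMean ψ α (l1Loss w') ω < l1Risk P w' + α * l2Risk P w' / 2 + s)
    (hlow : l1Risk P v - ε * ∫ z, ‖z.1‖ ∂P - α * (l2Risk P v + ε ^ 2 * ∫ z, ‖z.1‖ ^ 2 ∂P) / 2 - s'
      < catoniMean ψ α (fun z => l1Loss v z - ε * ‖z.1‖) ω) :
    l1Risk P w - l1Risk P w' ≤ 2 * ε * ∫ z, ‖z.1‖ ∂P
      + α * (l2Risk P v + ε ^ 2 * ∫ z, ‖z.1‖ ^ 2 ∂P + l2Risk P w') / 2 + s + s' := by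
  have hshift : catoniMean ψ α (fun z => l1Loss v z - ε * ‖z.1‖) ω ≤
      catoniMean ψ α (l1Loss w) ω :=
    catoniMean_mono hψ hα fun i => by linarith [(abs_le.1 (abs_l1Loss_sub_l1Loss_le hwv (ω i))).1]
  linarith [l1Risk_le_add_of_norm_sub_le hw hv hx hwv]

variable [IsProbabilityMeasure P] {ψ : ℝ → ℝ} {α : ℝ} {n : ℕ}

theorem measure_pi_catoniMean_l1Loss_sub_le (hψ : Measurable ψ)
    (hψlb : ∀ x, -log (1 - x + x ^ 2 / 2) ≤ ψ x) (hα : 0 < α) (hn : 0 < n) {v : H} {ε : ℝ}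
    (hε : 0 ≤ ε) (hv : MemLp (l1Loss v) 2 P) (hx : MemLp (fun z : H × ℝ => ‖z.1‖) 2 P)
    (t : ℝ) :
    Measure.pi (fun _ : Fin n => P)
      {ω | catoniMean ψ α (fun z => l1Loss v z - ε * ‖z.1‖) ω ≤
        l1Risk P v - ε * ∫ z, ‖z.1‖ ∂P
          - α * (l2Risk P v + ε ^ 2 * ∫ z, ‖z.1‖ ^ 2 ∂P) / 2 - 1 / (n * α) * t} ≤
      ENNReal.ofReal (exp (-t)) := by
  have hεx : MemLp (fun z : H × ℝ => ε * ‖z.1‖) 2 P := hx.const_mul ε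
  have hX : MemLp (fun z => l1Loss v z - ε * ‖z.1‖) 2 P := hv.sub hεx
  have hmean : ∫ z, (l1Loss v z - ε * ‖z.1‖) ∂P = l1Risk P v - ε * ∫ z, ‖z.1‖ ∂P := by
    rw [integral_sub (hv.integrable one_le_two) (hεx.integrable one_le_two),
      integral_const_mul]; rfl
  have hsq : ∫ z, (l1Loss v z - ε * ‖z.1‖) ^ 2 ∂P ≤
      l2Risk P v + ε ^ 2 * ∫ z, ‖z.1‖ ^ 2 ∂P := by
    have := integral_sub_sq_le_of_nonneg hv hεx (fun z => abs_nonneg _)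
      (fun z => mul_nonneg hε (norm_nonneg _))
    simpa only [integral_l1Loss_sq, mul_pow, integral_const_mul] using this
  refine (measure_mono fun ω hω => ?_).trans
    (measure_pi_catoniMean_le_le hψ hψlb hX hα hn t)
  simp only [Set.mem_ofPred_eq, hmean] at hω ⊢
  nlinarith [mul_le_mul_of_nonneg_left hsq hα.le]

end L1Loss

theorem exists_finset_card_eq_coveringNumber {H : Type*} [NormedAddCommGroup H] {W : Set H}
    {ε : ℝ} (h : ∃ N : Finset H, ↑N ⊆ W ∧ ∀ w ∈ W, ∃ v ∈ N, ‖w - v‖ ≤ ε) :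
    ∃ N : Finset H, ↑N ⊆ W ∧ N.card = coveringNumber W ε ∧ ∀ w ∈ W, ∃ v ∈ N, ‖w - v‖ ≤ ε := by
  obtain ⟨N, hNW, hN⟩ := h
  exact Nat.sInf_mem (s := {k | ∃ N : Finset H, ↑N ⊆ W ∧ N.card = k ∧
    ∀ w ∈ W, ∃ v ∈ N, ‖w - v‖ ≤ ε}) ⟨N.card, N, hNW, rfl, hN⟩

theorem ofReal_one_sub_two_mul_le_measure_compl {Ω ι : Type*} [MeasurableSpace Ω]
    {μ : Measure Ω} [IsProbabilityMeasure μ] {A : Set Ω} {B : ι → Set Ω} {T : Finset ι}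
    {δ : ℝ} (hδ : 0 ≤ δ) (hA : μ A ≤ ENNReal.ofReal δ)
    (hB : ∀ i ∈ T, μ (B i) ≤ ENNReal.ofReal (δ / T.card)) :
    ENNReal.ofReal (1 - 2 * δ) ≤ μ (A ∪ ⋃ i ∈ T, B i)ᶜ := by
  have hsum : (T.card : ENNReal) * ENNReal.ofReal (δ / T.card) ≤ ENNReal.ofReal δ := by
    rw [← ENNReal.ofReal_natCast, ← ENNReal.ofReal_mul (Nat.cast_nonneg _)]
    gcongr
    rcases (Nat.cast_nonneg (α := ℝ) T.card).eq_or_lt with h | h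
    · simp [← h, hδ]
    · rw [mul_div_cancel₀ _ h.ne']
  have hbad : μ (A ∪ ⋃ i ∈ T, B i) ≤ ENNReal.ofReal (2 * δ) :=
    calc μ (A ∪ ⋃ i ∈ T, B i) ≤ μ A + ∑ i ∈ T, μ (B i) :=
          (measure_union_le _ _).trans (add_le_add le_rfl (measure_biUnion_finset_le T B))
      _ ≤ ENNReal.ofReal δ + ENNReal.ofReal δ := by
          gcongr
          exact (sum_le_sum hB).trans (by rw [sum_const, nsmul_eq_mul]; exact hsum)
      _ = ENNReal.ofReal (2 * δ) := by rw [← ENNReal.ofReal_add hδ hδ, two_mul]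
  calc ENNReal.ofReal (1 - 2 * δ) = 1 - ENNReal.ofReal (2 * δ) := by
        rw [ENNReal.ofReal_sub _ (by positivity), ENNReal.ofReal_one]
    _ ≤ 1 - μ (A ∪ ⋃ i ∈ T, B i) := tsub_le_tsub_left hbad 1
    _ ≤ μ (A ∪ ⋃ i ∈ T, B i)ᶜ := by
        rw [tsub_le_iff_left, ← measure_univ (μ := μ)]
        exact measure_univ_le_add_compl _
theorem truncated_min_excess_risk_general
    {H : Type*} [NormedAddCommGroup H] [InnerProductSpace ℝ H]
    [MeasurableSpace H] [BorelSpace H]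
    (P : Measure (H × ℝ)) [IsProbabilityMeasure P]
    (W : Set H) (ψ : ℝ → ℝ)
    (hψmono : Monotone ψ)
    (hψlb : ∀ x : ℝ, -Real.log (1 - x + x ^ 2 / 2) ≤ ψ x)
    (hψub : ∀ x : ℝ, ψ x ≤ Real.log (1 + x + x ^ 2 / 2))
    (n : ℕ) (hn : 0 < n) (α : ℝ) (hα : 0 < α)
    -- (A1): W is totally bounded: for every ε > 0 there is a finite ε-net of W
    (hA1 : ∀ ε > (0 : ℝ), ∃ N : Finset H, ↑N ⊆ W ∧ ∀ w ∈ W, ∃ v ∈ N, ‖w - v‖ ≤ ε)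
    -- (A2): E‖x‖² < ∞ (and hence E‖x‖ < ∞)
    (hA2 : Integrable (fun z : H × ℝ => ‖z.1‖ ^ 2) P)
    -- risks are well defined on W
    (hInt2 : ∀ w ∈ W, Integrable (fun z : H × ℝ => (z.2 - (inner ℝ z.1 w : ℝ)) ^ 2) P)
    -- (A3): sup_{w ∈ W} R_{ℓ2}(w) < ∞
    (hA3 : BddAbove (l2Risk P '' W))
    -- ŵ : any minimizer of the truncated empirical risk over W
    (what : (Fin n → H × ℝ) → H)
    (hwhatW : ∀ ω, what ω ∈ W)
    (hwhatMin : ∀ ω, ∀ w ∈ W, truncEmpRisk ψ α n ω (what ω) ≤ truncEmpRisk ψ α n ω w)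
    -- w* : any minimizer of the ℓ1-risk over W
    (wstar : H) (hwstarW : wstar ∈ W)
    (ε δ : ℝ) (hε : 0 < ε) (hδ : 0 < δ) :
    ENNReal.ofReal (1 - 2 * δ) ≤
      Measure.pi (fun _ : Fin n => P)
        {ω | l1Risk P (what ω) - l1Risk P wstar ≤
          2 * ε * (∫ z, ‖z.1‖ ∂P) + α * ε ^ 2 * (∫ z, ‖z.1‖ ^ 2 ∂P)
          + 3 * α / 2 * sSup (l2Risk P '' W)
          + 1 / (n * α) * Real.log ((coveringNumber W ε : ℝ) / δ ^ 2)} := by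
  obtain ⟨T, hTW, hTcard, hTcov⟩ := exists_finset_card_eq_coveringNumber (hA1 ε hε)
  have hT : (0 : ℝ) < T.card := by
    obtain ⟨v, hv, -⟩ := hTcov wstar hwstarW
    exact_mod_cast card_pos.2 ⟨v, hv⟩
  have hψ : Measurable ψ := hψmono.measurable
  have hx : MemLp (fun z : H × ℝ => ‖z.1‖) 2 P :=
    (memLp_two_iff_integrable_sq measurable_fst.norm.aestronglyMeasurable).2 hA2
  have hloss : ∀ w ∈ W, MemLp (l1Loss w) 2 P := fun w hw => memLp_l1Loss (hInt2 w hw)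
  -- levels `t` with `exp (-t) = δ` for `w*` and `exp (-t) = δ / N` for each point of the net
  refine (ofReal_one_sub_two_mul_le_measure_compl hδ.le
    ((measure_pi_catoniMean_ge_le hψ hψub (hloss wstar hwstarW) hα hn (-log δ)).trans_eq
      (by rw [neg_neg, exp_log hδ]))
    fun v hv => (measure_pi_catoniMean_l1Loss_sub_le hψ hψlb hα hn hε.le (hloss v (hTW hv)) hx
      (log T.card - log δ)).trans_eq (by rw [neg_sub, exp_sub, exp_log hδ, exp_log hT])).trans
    (measure_mono fun ω hω => ?_)
  simp only [Set.mem_compl_iff, Set.mem_union, Set.mem_iUnion, not_or, not_exists, not_le,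
    Set.mem_ofPred_eq, integral_l1Loss, integral_l1Loss_sq] at hω ⊢
  obtain ⟨v, hvT, hv⟩ := hTcov (what ω) (hwhatW ω)
  have hexcess := l1Risk_sub_l1Risk_le_of_catoniMean hψmono hα.le
    ((hloss _ (hwhatW ω)).integrable one_le_two) ((hloss v (hTW hvT)).integrable one_le_two)
    (hx.integrable one_le_two) hv
    (by simpa only [truncEmpRisk_eq_catoniMean] using hwhatMin ω wstar hwstarW) hω.1 (hω.2 v hvT)
  have hS : ∀ w ∈ W, l2Risk P w ≤ sSup (l2Risk P '' W) := fun w hw => le_csSup hA3 ⟨w, hw, rfl⟩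
  have hlog : log (coveringNumber W ε / δ ^ 2) = -log δ + (log T.card - log δ) := by
    rw [← hTcard, log_div hT.ne' (by positivity), log_pow]; push_cast; ring
  have hl2 : 0 ≤ l2Risk P wstar := integral_nonneg fun z => sq_nonneg _
  have hx2 : 0 ≤ ∫ z, ‖z.1‖ ^ 2 ∂P := integral_nonneg fun z => sq_nonneg _
  rw [hlog]
  linarith [mul_le_mul_of_nonneg_left (hS v (hTW hvT)) hα.le,
    mul_le_mul_of_nonneg_left (hS wstar hwstarW) hα.le, mul_nonneg hα.le hl2,
    mul_nonneg (mul_nonneg hα.le (sq_nonneg ε)) hx2]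

/-- Theorem 1 of the paper (first part): with probability at least `1 − 2δ`,
`R_{ℓ1}(ŵ) − R_{ℓ1}(w*) ≤ 2ε E‖x‖ + αε² E‖x‖² + (3α/2) sup_{w∈W} R_{ℓ2}(w)
  + (1/(nα)) log(N(W,ε)/δ²)`. -/
theorem truncated_min_excess_risk
    {H : Type*} [NormedAddCommGroup H] [InnerProductSpace ℝ H] [CompleteSpace H]
    [MeasurableSpace H] [BorelSpace H]
    (P : Measure (H × ℝ)) [IsProbabilityMeasure P]
    (W : Set H) (ψ : ℝ → ℝ)
    (hψmono : Monotone ψ)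
    (hψlb : ∀ x : ℝ, -Real.log (1 - x + x ^ 2 / 2) ≤ ψ x)
    (hψub : ∀ x : ℝ, ψ x ≤ Real.log (1 + x + x ^ 2 / 2))
    (n : ℕ) (hn : 0 < n) (α : ℝ) (hα : 0 < α)
    -- (A1): W is totally bounded: for every ε > 0 there is a finite ε-net of W
    (hA1 : ∀ ε > (0 : ℝ), ∃ N : Finset H, ↑N ⊆ W ∧ ∀ w ∈ W, ∃ v ∈ N, ‖w - v‖ ≤ ε)
    -- (A2): E‖x‖² < ∞ (and hence E‖x‖ < ∞)
    (hxInt : Integrable (fun z : H × ℝ => ‖z.1‖) P)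
    (hA2 : Integrable (fun z : H × ℝ => ‖z.1‖ ^ 2) P)
    -- risks are well defined on W
    (hInt1 : ∀ w ∈ W, Integrable (fun z : H × ℝ => |z.2 - (inner ℝ z.1 w : ℝ)|) P)
    (hInt2 : ∀ w ∈ W, Integrable (fun z : H × ℝ => (z.2 - (inner ℝ z.1 w : ℝ)) ^ 2) P)
    -- (A3): sup_{w ∈ W} R_{ℓ2}(w) < ∞
    (hA3 : BddAbove (l2Risk P '' W))
    -- ŵ : any minimizer of the truncated empirical risk over W
    (what : (Fin n → H × ℝ) → H)
    (hwhatW : ∀ ω, what ω ∈ W)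
    (hwhatMin : ∀ ω, ∀ w ∈ W, truncEmpRisk ψ α n ω (what ω) ≤ truncEmpRisk ψ α n ω w)
    -- w* : any minimizer of the ℓ1-risk over W
    (wstar : H) (hwstarW : wstar ∈ W)
    (hwstarMin : ∀ w ∈ W, l1Risk P wstar ≤ l1Risk P w)
    (ε δ : ℝ) (hε : 0 < ε) (hδ : 0 < δ) (hδ' : δ < 1 / 2) :
    ENNReal.ofReal (1 - 2 * δ) ≤
      Measure.pi (fun _ : Fin n => P)
        {ω | l1Risk P (what ω) - l1Risk P wstar ≤
          2 * ε * (∫ z, ‖z.1‖ ∂P) + α * ε ^ 2 * (∫ z, ‖z.1‖ ^ 2 ∂P)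
          + 3 * α / 2 * sSup (l2Risk P '' W)
          + 1 / (n * α) * Real.log ((coveringNumber W ε : ℝ) / δ ^ 2)} :=
  truncated_min_excess_risk_general P W ψ hψmono hψlb hψub n hn α hα hA1 hA2 hInt2 hA3 what hwhatW
    hwhatMin wstar hwstarW ε δ hε hδ
end

section
/- Let w* ∈ W be a fixed vector (independent of the sample) with R_{ℓ2}(w*) < ∞. Then for every 0 < δ < 1, with probability at least 1 − δ over the i.i.d. sample, R̂_{ψ∘ℓ1}(w*) ≤ R_{ℓ1}(w*) + (α/2)·R_{ℓ2}(w*) + (1/(nα))·log(1/δ). -/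
open MeasureTheory Real

/-!
Chernoff's method. Since `exp ∘ ψ ≤ 1 + x + x²/2`, the variable `Y = α|y − ⟨x, w*⟩|` satisfies
`log E[exp ψ(Y)] ≤ E[Y] + E[Y²]/2 = α R_{ℓ1}(w*) + (α²/2) R_{ℓ2}(w*)`. For the i.i.d. sum
`S = Σ_i ψ(Y_i)` one has `E[exp S] = E[exp ψ(Y)]ⁿ`, so Markov's inequality for `exp S` gives
`S ≤ n log E[exp ψ(Y)] + log(1/δ)` with probability at least `1 − δ`; dividing by `nα` is the claim.
-/

section

open ProbabilityTheory

variable {Ω : Type*} [MeasurableSpace Ω] {μ : Measure Ω}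

lemma measure_log_integral_exp_add_lt_le [IsFiniteMeasure μ] [NeZero μ] {S : Ω → ℝ}
    (hS : Integrable (fun ω => exp (S ω)) μ) {δ : ℝ} (hδ : 0 < δ) :
    μ {ω | log (∫ ω, exp (S ω) ∂μ) + log (1 / δ) < S ω} ≤ ENNReal.ofReal δ := by
  set c := log (∫ ω, exp (S ω) ∂μ) + log (1 / δ)
  have hchernoff : μ.real {ω | c ≤ S ω} ≤ exp (-1 * c) * mgf S μ 1 :=
    measure_ge_le_exp_mul_mgf c zero_le_one (by simpa using hS)
  have hexp : exp (-1 * c) * mgf S μ 1 = δ := by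
    have hpos := integral_exp_pos hS
    simp only [mgf, one_mul, neg_one_mul, c, exp_neg, exp_add,
      exp_log hpos, exp_log (one_div_pos.2 hδ)]
    field_simp
  calc μ {ω | c < S ω} ≤ μ {ω | c ≤ S ω} :=
        measure_mono <| Set.ofPred_subset_ofPred.2 fun _ hω => hω.le
    _ ≤ ENNReal.ofReal δ :=
      (ENNReal.le_ofReal_iff_toReal_le (measure_ne_top μ _) hδ.le).2 (hexp ▸ hchernoff)

variable {ι : Type*} [Fintype ι]

lemma integrable_exp_sum_pi [SigmaFinite μ] {X : Ω → ℝ}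
    (hX : Integrable (fun z => exp (X z)) μ) :
    Integrable (fun ω : ι → Ω => exp (∑ i, X (ω i))) (Measure.pi fun _ => μ) := by
  simp_rw [exp_sum]
  exact Integrable.fintype_prod fun _ => hX

lemma integral_exp_sum_pi [SigmaFinite μ] (X : Ω → ℝ) :
    ∫ ω : ι → Ω, exp (∑ i, X (ω i)) ∂(Measure.pi fun _ => μ) =
      (∫ z, exp (X z) ∂μ) ^ Fintype.card ι := by
  simp_rw [exp_sum]
  exact integral_fintype_prod_eq_pow (ι := ι) (μ := μ) (fun z => exp (X z))

lemma ofReal_one_sub_le_measure_of_measure_compl_le [IsProbabilityMeasure μ] {s : Set Ω}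
    {δ : ℝ} (hδ : 0 ≤ δ) (h : μ sᶜ ≤ ENNReal.ofReal δ) :
    ENNReal.ofReal (1 - δ) ≤ μ s := by
  calc ENNReal.ofReal (1 - δ) = μ Set.univ - ENNReal.ofReal δ := by
        rw [ENNReal.ofReal_sub _ hδ, ENNReal.ofReal_one, measure_univ]
    _ ≤ μ Set.univ - μ sᶜ := by gcongr
    _ ≤ μ s := tsub_le_iff_right.2 (measure_univ_le_add_compl s)

lemma ofReal_one_sub_le_pi_sum_le [IsProbabilityMeasure μ] {X : Ω → ℝ}
    (hX : Integrable (fun z => exp (X z)) μ) {δ : ℝ} (hδ : 0 < δ) :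
    ENNReal.ofReal (1 - δ) ≤ Measure.pi (fun _ : ι => μ)
      {ω | ∑ i, X (ω i) ≤ Fintype.card ι * log (∫ z, exp (X z) ∂μ) + log (1 / δ)} := by
  refine ofReal_one_sub_le_measure_of_measure_compl_le hδ.le ?_
  have := measure_log_integral_exp_add_lt_le (integrable_exp_sum_pi (ι := ι) hX) hδ
  rw [integral_exp_sum_pi, log_pow] at this
  simpa only [Set.compl_ofPred, not_le] using this

variable {ψ : ℝ → ℝ} {Y : Ω → ℝ}

lemma exp_le_one_add_add_sq_div_two_of_le_log {x : ℝ} (hψ : ψ x ≤ log (1 + x + x ^ 2 / 2)) :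
    exp (ψ x) ≤ 1 + x + x ^ 2 / 2 :=
  (le_log_iff_exp_le (by nlinarith [sq_nonneg (x + 1)])).1 hψ

lemma integrable_exp_comp [IsFiniteMeasure μ] (hψ : ∀ x, ψ x ≤ log (1 + x + x ^ 2 / 2))
    (hψm : Measurable ψ) (hY : Integrable Y μ) (hY2 : Integrable (fun ω => Y ω ^ 2) μ) :
    Integrable (fun ω => exp (ψ (Y ω))) μ := by
  refine (((integrable_const 1).add hY).add (hY2.div_const 2)).mono'
    ((measurable_exp.comp hψm).comp_aemeasurable hY.aemeasurable).aestronglyMeasurable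
    (ae_of_all _ fun ω => ?_)
  rw [norm_of_nonneg (exp_pos _).le]
  exact exp_le_one_add_add_sq_div_two_of_le_log (hψ (Y ω))

lemma log_integral_exp_comp_le [IsProbabilityMeasure μ]
    (hψ : ∀ x, ψ x ≤ log (1 + x + x ^ 2 / 2)) (hψm : Measurable ψ) (hY : Integrable Y μ)
    (hY2 : Integrable (fun ω => Y ω ^ 2) μ) :
    log (∫ ω, exp (ψ (Y ω)) ∂μ) ≤ ∫ ω, Y ω ∂μ + (∫ ω, Y ω ^ 2 ∂μ) / 2 := by
  have hint := integrable_exp_comp hψ hψm hY hY2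
  have hY1 : Integrable (fun ω => 1 + Y ω) μ := (integrable_const 1).add hY
  have hbound : Integrable (fun ω => 1 + Y ω + Y ω ^ 2 / 2) μ := hY1.add (hY2.div_const 2)
  calc log (∫ ω, exp (ψ (Y ω)) ∂μ) ≤ (∫ ω, exp (ψ (Y ω)) ∂μ) - 1 :=
        log_le_sub_one_of_pos (integral_exp_pos hint)
    _ ≤ (∫ ω, (1 + Y ω + Y ω ^ 2 / 2) ∂μ) - 1 :=
        sub_le_sub_right (integral_mono hint hbound
          fun ω => exp_le_one_add_add_sq_div_two_of_le_log (hψ (Y ω))) 1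
    _ = ∫ ω, Y ω ∂μ + (∫ ω, Y ω ^ 2 ∂μ) / 2 := by
        rw [integral_add hY1 (hY2.div_const 2), integral_add (integrable_const 1) hY,
          integral_const, integral_div]
        simp only [probReal_univ, one_smul]
        ring

end

theorem trunc_emp_risk_upper_bound_fixed_general
    {H : Type*} [NormedAddCommGroup H] [InnerProductSpace ℝ H]
    [MeasurableSpace H]
    (P : Measure (H × ℝ)) [IsProbabilityMeasure P]
    (ψ : ℝ → ℝ)
    (hψmono : Monotone ψ)
    (hψub : ∀ x : ℝ, ψ x ≤ Real.log (1 + x + x ^ 2 / 2))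
    (n : ℕ) (hn : 0 < n) (α : ℝ) (hα : 0 < α)
    -- w* : a fixed vector of W, independent of the sample
    (wstar : H)
    -- R_{ℓ2}(w*) < ∞ (so in particular R_{ℓ1}(w*) is well defined as well)
    (hInt2 : Integrable (fun z : H × ℝ => (z.2 - (inner ℝ z.1 wstar : ℝ)) ^ 2) P)
    (hInt1 : Integrable (fun z : H × ℝ => |z.2 - (inner ℝ z.1 wstar : ℝ)|) P)
    (δ : ℝ) (hδ : 0 < δ) :
    ENNReal.ofReal (1 - δ) ≤
      Measure.pi (fun _ : Fin n => P)
        {ω | truncEmpRisk ψ α n ω wstar ≤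
          l1Risk P wstar + α / 2 * l2Risk P wstar + 1 / (n * α) * Real.log (1 / δ)} := by
  set Y : H × ℝ → ℝ := fun z => α * |z.2 - (inner ℝ z.1 wstar : ℝ)|
  have hY : Integrable Y P := hInt1.const_mul α
  have hY2 : Integrable (fun z => Y z ^ 2) P := by
    simpa only [Y, mul_pow, sq_abs] using hInt2.const_mul (α ^ 2)
  have hlog : log (∫ z, exp (ψ (Y z)) ∂P) ≤
      α * l1Risk P wstar + α ^ 2 / 2 * l2Risk P wstar := by
    refine (log_integral_exp_comp_le hψub hψmono.measurable hY hY2).trans_eq ?_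
    simp only [Y, mul_pow, sq_abs, integral_const_mul, l1Risk, l2Risk]
    ring
  refine (ofReal_one_sub_le_pi_sum_le
    (integrable_exp_comp hψub hψmono.measurable hY hY2) hδ).trans (measure_mono fun ω hω => ?_)
  rw [Set.mem_ofPred_eq, Fintype.card_fin] at hω
  have hnα : 0 < (n : ℝ) * α := by positivity
  calc truncEmpRisk ψ α n ω wstar = 1 / (n * α) * ∑ i, ψ (Y (ω i)) := rfl
    _ ≤ 1 / (n * α) * (n * (α * l1Risk P wstar + α ^ 2 / 2 * l2Risk P wstar) + log (1 / δ)) :=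
        by gcongr; exact hω.trans (by gcongr)
    _ = _ := by field_simp

/-- Lemma 1 of the paper: for a fixed `w* ∈ W` with `R_{ℓ2}(w*) < ∞`, with probability
at least `1 − δ`, `R̂_{ψ∘ℓ1}(w*) ≤ R_{ℓ1}(w*) + (α/2) R_{ℓ2}(w*) + (1/(nα)) log(1/δ)`. -/
theorem trunc_emp_risk_upper_bound_fixed
    {H : Type*} [NormedAddCommGroup H] [InnerProductSpace ℝ H] [CompleteSpace H]
    [MeasurableSpace H] [BorelSpace H]
    (P : Measure (H × ℝ)) [IsProbabilityMeasure P]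
    (W : Set H) (ψ : ℝ → ℝ)
    (hψmono : Monotone ψ)
    (hψlb : ∀ x : ℝ, -Real.log (1 - x + x ^ 2 / 2) ≤ ψ x)
    (hψub : ∀ x : ℝ, ψ x ≤ Real.log (1 + x + x ^ 2 / 2))
    (n : ℕ) (hn : 0 < n) (α : ℝ) (hα : 0 < α)
    -- w* : a fixed vector of W, independent of the sample
    (wstar : H) (hwstarW : wstar ∈ W)
    -- R_{ℓ2}(w*) < ∞ (so in particular R_{ℓ1}(w*) is well defined as well)
    (hInt2 : Integrable (fun z : H × ℝ => (z.2 - (inner ℝ z.1 wstar : ℝ)) ^ 2) P)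
    (hInt1 : Integrable (fun z : H × ℝ => |z.2 - (inner ℝ z.1 wstar : ℝ)|) P)
    (δ : ℝ) (hδ : 0 < δ) (hδ' : δ < 1) :
    ENNReal.ofReal (1 - δ) ≤
      Measure.pi (fun _ : Fin n => P)
        {ω | truncEmpRisk ψ α n ω wstar ≤
          l1Risk P wstar + α / 2 * l2Risk P wstar + 1 / (n * α) * Real.log (1 / δ)} :=
  trunc_emp_risk_upper_bound_fixed_general P ψ hψmono hψub n hn α hα wstar hInt2 hInt1 δ hδ
end

section
/- Fix ε > 0 and let N(W,ε) be an ε-net of W with minimal cardinality N(W,ε). Then for every 0 < δ < 1, with probability at least 1 − δ over the i.i.d. sample, simultaneously for all w̃ ∈ N(W,ε): (1/(nα)) Σ_{i=1}^n ψ( α|y_i − ⟨x_i,w̃⟩| − α·ε·‖x_i‖ ) ≥ R_{ℓ1}(w̃) − [ ε·E[‖x‖] + α·sup_{w∈W} R_{ℓ2}(w) + α·ε²·E[‖x‖²] + (1/(nα))·log(N(W,ε)/δ) ]. -/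
open MeasureTheory Real

/-!
Since `ψ ≥ -log (1 - x + x²/2)`, the shifted loss `u = |y - ⟪x, w̃⟫| - ε‖x‖` satisfies
`E exp (-ψ (α u)) ≤ 1 - α E u + α² E u² / 2 ≤ exp (-α E u + α² E u² / 2)`, and
`E u² ≤ R_{ℓ2}(w̃) + ε² E‖x‖²`. By independence this gives the Chernoff bound
`exp t · (E exp (-ψ (α u)))ⁿ` for the event `∑ ψ (α u (xᵢ, yᵢ)) < t`; the choice of `t` makes each
point of the net fail with probability at most `δ / N(W, ε)`, and a union bound over the net ends
the proof.
-/

open ProbabilityTheory Filter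

lemma exp_neg_le_of_neg_log_le {x y : ℝ} (h : -log (1 - x + x ^ 2 / 2) ≤ y) :
    exp (-y) ≤ 1 - x + x ^ 2 / 2 := by
  have hpos : 0 < 1 - x + x ^ 2 / 2 := by nlinarith [sq_nonneg (x - 1)]
  calc exp (-y) ≤ exp (log (1 - x + x ^ 2 / 2)) := exp_le_exp.2 (by linarith)
    _ = 1 - x + x ^ 2 / 2 := exp_log hpos

section Truncation

variable {Ω : Type*} [MeasurableSpace Ω] {μ : Measure Ω} {ψ : ℝ → ℝ} {f : Ω → ℝ}

lemma integrable_exp_neg_comp [IsFiniteMeasure μ] (hψmono : Monotone ψ)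
    (hψlb : ∀ x, -log (1 - x + x ^ 2 / 2) ≤ ψ x)
    (hf : Integrable f μ) (hf2 : Integrable (fun ω => f ω ^ 2) μ) :
    Integrable (fun ω => exp (-ψ (f ω))) μ := by
  have hdom : Integrable (fun ω => 1 - f ω + f ω ^ 2 / 2) μ :=
    ((integrable_const 1).sub hf).add (hf2.div_const 2)
  refine hdom.mono' ?_ (Eventually.of_forall fun ω => ?_)
  · exact (continuous_exp.measurable.comp_aemeasurable
      (hψmono.measurable.comp_aemeasurable hf.aemeasurable).neg).aestronglyMeasurable
  · rw [Real.norm_eq_abs, abs_of_pos (exp_pos _)]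
    exact exp_neg_le_of_neg_log_le (hψlb _)

lemma integral_exp_neg_comp_le [IsProbabilityMeasure μ] (hψmono : Monotone ψ)
    (hψlb : ∀ x, -log (1 - x + x ^ 2 / 2) ≤ ψ x)
    (hf : Integrable f μ) (hf2 : Integrable (fun ω => f ω ^ 2) μ) :
    ∫ ω, exp (-ψ (f ω)) ∂μ ≤ exp (-(∫ ω, f ω ∂μ) + (∫ ω, f ω ^ 2 ∂μ) / 2) := by
  have hlin : Integrable (fun ω => 1 - f ω) μ := (integrable_const 1).sub hf
  have hquad : Integrable (fun ω => f ω ^ 2 / 2) μ := hf2.div_const 2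
  calc ∫ ω, exp (-ψ (f ω)) ∂μ ≤ ∫ ω, (1 - f ω + f ω ^ 2 / 2) ∂μ :=
        integral_mono (integrable_exp_neg_comp hψmono hψlb hf hf2) (hlin.add hquad)
          fun ω => exp_neg_le_of_neg_log_le (hψlb _)
    _ = 1 + (-(∫ ω, f ω ∂μ) + (∫ ω, f ω ^ 2 ∂μ) / 2) := by
        rw [integral_add hlin hquad, integral_sub (integrable_const 1) hf, integral_div]
        simp only [integral_const, probReal_univ, smul_eq_mul, one_mul]
        ring
    _ ≤ _ := by linarith [add_one_le_exp (-(∫ ω, f ω ∂μ) + (∫ ω, f ω ^ 2 ∂μ) / 2)]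

end Truncation

lemma measure_pi_sum_lt_le {ι Ω : Type*} [Fintype ι] [MeasurableSpace Ω] (P : Measure Ω)
    [IsProbabilityMeasure P] {g : Ω → ℝ} (hg : Integrable (fun z => exp (-g z)) P) (t : ℝ) :
    Measure.pi (fun _ : ι => P) {ω | ∑ i, g (ω i) < t} ≤
      ENNReal.ofReal (exp t * (∫ z, exp (-g z) ∂P) ^ Fintype.card ι) := by
  have hprod : ∀ ω : ι → Ω, exp (-1 * ∑ i, g (ω i)) = ∏ i, exp (-g (ω i)) := fun ω => by
    rw [neg_one_mul, ← Finset.sum_neg_distrib, exp_sum]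
  have hint : Integrable (fun ω : ι → Ω => exp (-1 * ∑ i, g (ω i))) (Measure.pi fun _ => P) := by
    simp_rw [hprod]
    exact Integrable.fintype_prod (μ := fun _ => P) fun _ => hg
  have hmgf : mgf (fun ω : ι → Ω => ∑ i, g (ω i)) (Measure.pi fun _ => P) (-1)
      = (∫ z, exp (-g z) ∂P) ^ Fintype.card ι := by
    simp_rw [mgf, hprod]
    exact integral_fintype_prod_eq_pow (μ := P) (fun z => exp (-g z))
  calc Measure.pi (fun _ : ι => P) {ω | ∑ i, g (ω i) < t}
      ≤ Measure.pi (fun _ : ι => P) {ω | ∑ i, g (ω i) ≤ t} :=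
        measure_mono fun ω (h : _ < t) => h.le
    _ = ENNReal.ofReal ((Measure.pi fun _ : ι => P).real {ω | ∑ i, g (ω i) ≤ t}) :=
        (ofReal_measureReal).symm
    _ ≤ _ := by
        gcongr
        simpa [hmgf] using measure_le_le_exp_mul_mgf t (by norm_num) hint

lemma ofReal_one_sub_le_measure_forall_mem {Ω ι : Type*} [MeasurableSpace Ω] {μ : Measure Ω}
    [IsProbabilityMeasure μ] {s : Finset ι} {p : ι → Ω → Prop} {δ : ℝ} (hδ : 0 ≤ δ)
    (h : ∀ i ∈ s, μ {ω | ¬p i ω} ≤ ENNReal.ofReal (δ / s.card)) :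
    ENNReal.ofReal (1 - δ) ≤ μ {ω | ∀ i ∈ s, p i ω} := by
  have hcompl : μ {ω | ∀ i ∈ s, p i ω}ᶜ ≤ ENNReal.ofReal δ := calc
    μ {ω | ∀ i ∈ s, p i ω}ᶜ = μ (⋃ i ∈ s, {ω | ¬p i ω}) := by
      congr 1; ext ω; simp
    _ ≤ ∑ i ∈ s, μ {ω | ¬p i ω} := measure_biUnion_finset_le _ _
    _ ≤ ∑ _i ∈ s, ENNReal.ofReal (δ / s.card) := Finset.sum_le_sum h
    _ = ENNReal.ofReal (s.card * (δ / s.card)) := by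
      rw [Finset.sum_const, nsmul_eq_mul, ENNReal.ofReal_mul (Nat.cast_nonneg _),
        ENNReal.ofReal_natCast]
    _ ≤ ENNReal.ofReal δ := by
      gcongr
      rcases s.card.eq_zero_or_pos with hs | hs
      · simpa [hs] using hδ
      · rw [mul_div_cancel₀ _ (by positivity)]
  rw [ENNReal.ofReal_sub _ hδ, ENNReal.ofReal_one, ← measure_univ (μ := μ), tsub_le_iff_right]
  exact (measure_univ_le_add_compl _).trans (add_le_add_right hcompl _)

lemma sq_abs_sub_le {a b : ℝ} (hb : 0 ≤ b) : (|a| - b) ^ 2 ≤ a ^ 2 + b ^ 2 := by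
  nlinarith [sq_abs a, abs_nonneg a, mul_nonneg (abs_nonneg a) hb]

section Risk

variable {H : Type*} [NormedAddCommGroup H] [InnerProductSpace ℝ H] [MeasurableSpace H]
  {P : Measure (H × ℝ)} [IsProbabilityMeasure P] {ψ : ℝ → ℝ} {w : H} {α ε : ℝ}

lemma integrable_exp_neg_truncated_loss_and_integral_le (hψmono : Monotone ψ)
    (hψlb : ∀ x, -log (1 - x + x ^ 2 / 2) ≤ ψ x) (hε : 0 ≤ ε)
    (h1 : Integrable (fun z : H × ℝ => |z.2 - (inner ℝ z.1 w : ℝ)|) P)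
    (h2 : Integrable (fun z : H × ℝ => (z.2 - (inner ℝ z.1 w : ℝ)) ^ 2) P)
    (hxInt : Integrable (fun z : H × ℝ => ‖z.1‖) P)
    (hA2 : Integrable (fun z : H × ℝ => ‖z.1‖ ^ 2) P) :
    Integrable (fun z : H × ℝ => exp (-ψ (α * (|z.2 - (inner ℝ z.1 w : ℝ)| - ε * ‖z.1‖)))) P ∧
    ∫ z, exp (-ψ (α * (|z.2 - (inner ℝ z.1 w : ℝ)| - ε * ‖z.1‖))) ∂P ≤
      exp (-α * (l1Risk P w - ε * ∫ z, ‖z.1‖ ∂P) +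
        α ^ 2 / 2 * (l2Risk P w + ε ^ 2 * ∫ z, ‖z.1‖ ^ 2 ∂P)) := by
  set u : H × ℝ → ℝ := fun z => |z.2 - (inner ℝ z.1 w : ℝ)| - ε * ‖z.1‖
  have hsq : ∀ z, u z ^ 2 ≤ (z.2 - (inner ℝ z.1 w : ℝ)) ^ 2 + ε ^ 2 * ‖z.1‖ ^ 2 := fun z => by
    simpa only [mul_pow] using sq_abs_sub_le (mul_nonneg hε (norm_nonneg z.1))
  have hdom : Integrable (fun z : H × ℝ => (z.2 - (inner ℝ z.1 w : ℝ)) ^ 2 + ε ^ 2 * ‖z.1‖ ^ 2) P :=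
    h2.add (hA2.const_mul (ε ^ 2))
  have hu : Integrable u P := h1.sub (hxInt.const_mul ε)
  have hu2 : Integrable (fun z => u z ^ 2) P :=
    hdom.mono' (hu.aestronglyMeasurable.pow 2) (ae_of_all _ fun z => by
      simpa only [norm_pow, Real.norm_eq_abs, sq_abs] using hsq z)
  have hf2 : Integrable (fun z => (α * u z) ^ 2) P := by
    simpa only [mul_pow] using hu2.const_mul (α ^ 2)
  refine ⟨integrable_exp_neg_comp hψmono hψlb (hu.const_mul α) hf2,
    (integral_exp_neg_comp_le hψmono hψlb (hu.const_mul α) hf2).trans (exp_le_exp.2 ?_)⟩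
  have hIu : ∫ z, u z ∂P = l1Risk P w - ε * ∫ z, ‖z.1‖ ∂P := by
    rw [integral_sub h1 (hxInt.const_mul ε), integral_const_mul, l1Risk]
  have hIu2 : ∫ z, u z ^ 2 ∂P ≤ l2Risk P w + ε ^ 2 * ∫ z, ‖z.1‖ ^ 2 ∂P := by
    rw [l2Risk, ← integral_const_mul, ← integral_add h2 (hA2.const_mul _)]
    exact integral_mono hu2 hdom hsq
  simp only [mul_pow, integral_const_mul, hIu]
  nlinarith [sq_nonneg α]

lemma measure_sum_truncated_loss_lt_le (hψmono : Monotone ψ)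
    (hψlb : ∀ x, -log (1 - x + x ^ 2 / 2) ≤ ψ x) (hε : 0 ≤ ε)
    (h1 : Integrable (fun z : H × ℝ => |z.2 - (inner ℝ z.1 w : ℝ)|) P)
    (h2 : Integrable (fun z : H × ℝ => (z.2 - (inner ℝ z.1 w : ℝ)) ^ 2) P)
    (hxInt : Integrable (fun z : H × ℝ => ‖z.1‖) P)
    (hA2 : Integrable (fun z : H × ℝ => ‖z.1‖ ^ 2) P) (n : ℕ) (t : ℝ) :
    Measure.pi (fun _ : Fin n => P)
        {ω | ∑ i, ψ (α * |(ω i).2 - (inner ℝ (ω i).1 w : ℝ)| - α * ε * ‖(ω i).1‖) < t} ≤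
      ENNReal.ofReal (exp t * exp (-α * (l1Risk P w - ε * ∫ z, ‖z.1‖ ∂P) +
        α ^ 2 / 2 * (l2Risk P w + ε ^ 2 * ∫ z, ‖z.1‖ ^ 2 ∂P)) ^ n) := by
  obtain ⟨hint, hle⟩ :=
    integrable_exp_neg_truncated_loss_and_integral_le (α := α) hψmono hψlb hε h1 h2 hxInt hA2
  calc _ ≤ ENNReal.ofReal (exp t * (∫ z, exp (-ψ (α * (|z.2 - (inner ℝ z.1 w : ℝ)| -
          ε * ‖z.1‖))) ∂P) ^ n) := by
        simpa only [Fintype.card_fin, mul_sub, mul_assoc] using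
          measure_pi_sum_lt_le (ι := Fin n) P hint t
    _ ≤ _ := by gcongr

end Risk

theorem truncated_sum_lower_bound_on_net_general
    {H : Type*} [NormedAddCommGroup H] [InnerProductSpace ℝ H]
    [MeasurableSpace H]
    (P : Measure (H × ℝ)) [IsProbabilityMeasure P]
    (W : Set H) (ψ : ℝ → ℝ)
    (hψmono : Monotone ψ)
    (hψlb : ∀ x : ℝ, -Real.log (1 - x + x ^ 2 / 2) ≤ ψ x)
    (n : ℕ) (hn : 0 < n) (α : ℝ) (hα : 0 < α)
    -- (A2): E‖x‖² < ∞ (and hence E‖x‖ < ∞)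
    (hxInt : Integrable (fun z : H × ℝ => ‖z.1‖) P)
    (hA2 : Integrable (fun z : H × ℝ => ‖z.1‖ ^ 2) P)
    -- risks are well defined on W
    (hInt1 : ∀ w ∈ W, Integrable (fun z : H × ℝ => |z.2 - (inner ℝ z.1 w : ℝ)|) P)
    (hInt2 : ∀ w ∈ W, Integrable (fun z : H × ℝ => (z.2 - (inner ℝ z.1 w : ℝ)) ^ 2) P)
    -- (A3): sup_{w ∈ W} R_{ℓ2}(w) < ∞
    (hA3 : BddAbove (l2Risk P '' W))
    (ε : ℝ) (hε : 0 < ε)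
    -- N : an ε-net of W of minimal cardinality N(W, ε)
    (N : Finset H) (hNsub : ↑N ⊆ W)
    (hNcard : N.card = coveringNumber W ε)
    (δ : ℝ) (hδ : 0 < δ) :
    ENNReal.ofReal (1 - δ) ≤
      Measure.pi (fun _ : Fin n => P)
        {ω | ∀ wt ∈ N,
          1 / (n * α) * ∑ i, ψ (α * |(ω i).2 - (inner ℝ (ω i).1 wt : ℝ)| - α * ε * ‖(ω i).1‖) ≥
            l1Risk P wt -
              (ε * (∫ z, ‖z.1‖ ∂P) + α * sSup (l2Risk P '' W)
                + α * ε ^ 2 * (∫ z, ‖z.1‖ ^ 2 ∂P)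
                + 1 / (n * α) * Real.log ((coveringNumber W ε : ℝ) / δ))} := by
  set K := ε * (∫ z, ‖z.1‖ ∂P) + α * sSup (l2Risk P '' W) + α * ε ^ 2 * (∫ z, ‖z.1‖ ^ 2 ∂P)
    + 1 / (n * α) * Real.log ((coveringNumber W ε : ℝ) / δ) with hK
  refine ofReal_one_sub_le_measure_forall_mem hδ.le fun wt hwt => ?_
  have hw : wt ∈ W := hNsub hwt
  have hnα : 0 < (n : ℝ) * α := by positivity
  have hcard : (0 : ℝ) < N.card := by exact_mod_cast Finset.card_pos.2 ⟨wt, hwt⟩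
  calc _ ≤ Measure.pi (fun _ : Fin n => P) {ω | ∑ i, ψ (α * |(ω i).2 - (inner ℝ (ω i).1 wt : ℝ)|
          - α * ε * ‖(ω i).1‖) < n * α * (l1Risk P wt - K)} := measure_mono fun ω hω => by
        have := not_le.1 hω
        rw [one_div_mul_eq_div, div_lt_iff₀ hnα] at this
        exact this.trans_eq (mul_comm _ _)
    _ ≤ _ := measure_sum_truncated_loss_lt_le hψmono hψlb hε.le (hInt1 wt hw) (hInt2 wt hw)
          hxInt hA2 n _
    _ ≤ ENNReal.ofReal (δ / N.card) := by
        gcongr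
        have hR2 : l2Risk P wt ≤ sSup (l2Risk P '' W) := le_csSup hA3 ⟨wt, hw, rfl⟩
        have hR2_nonneg : 0 ≤ l2Risk P wt := integral_nonneg fun z => sq_nonneg _
        have hE2_nonneg : 0 ≤ ∫ z, ‖z.1‖ ^ 2 ∂P := integral_nonneg fun z => sq_nonneg _
        have hlog : n * α * K = n * α * (ε * (∫ z, ‖z.1‖ ∂P) + α * sSup (l2Risk P '' W)
            + α * ε ^ 2 * (∫ z, ‖z.1‖ ^ 2 ∂P)) + (log N.card - log δ) := by
          rw [hK, ← hNcard, log_div hcard.ne' hδ.ne']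
          field_simp
        rw [← exp_nat_mul, ← exp_add, ← exp_log (div_pos hδ hcard), log_div hδ.ne' hcard.ne']
        refine exp_le_exp.2 ?_
        nlinarith [mul_nonneg (mul_nonneg hnα.le hα.le) (mul_nonneg (sq_nonneg ε) hE2_nonneg),
          mul_nonneg (mul_nonneg hnα.le hα.le)
            (by linarith : 0 ≤ sSup (l2Risk P '' W) - l2Risk P wt / 2)]

/-- Lemma 3 of the paper: for a minimal ε-net `N` of `W`, with probability at least `1 − δ`,
simultaneously for all `w̃ ∈ N`:
`(1/(nα)) Σ_i ψ(α|y_i − ⟨x_i,w̃⟩| − αε‖x_i‖)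
  ≥ R_{ℓ1}(w̃) − [ε E‖x‖ + α sup_{w∈W} R_{ℓ2}(w) + αε² E‖x‖² + (1/(nα)) log(N(W,ε)/δ)]`. -/
theorem truncated_sum_lower_bound_on_net
    {H : Type*} [NormedAddCommGroup H] [InnerProductSpace ℝ H] [CompleteSpace H]
    [MeasurableSpace H] [BorelSpace H]
    (P : Measure (H × ℝ)) [IsProbabilityMeasure P]
    (W : Set H) (ψ : ℝ → ℝ)
    (hψmono : Monotone ψ)
    (hψlb : ∀ x : ℝ, -Real.log (1 - x + x ^ 2 / 2) ≤ ψ x)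
    (hψub : ∀ x : ℝ, ψ x ≤ Real.log (1 + x + x ^ 2 / 2))
    (n : ℕ) (hn : 0 < n) (α : ℝ) (hα : 0 < α)
    -- (A1): W is totally bounded
    (hA1 : ∀ ε' > (0 : ℝ), ∃ N : Finset H, ↑N ⊆ W ∧ ∀ w ∈ W, ∃ v ∈ N, ‖w - v‖ ≤ ε')
    -- (A2): E‖x‖² < ∞ (and hence E‖x‖ < ∞)
    (hxInt : Integrable (fun z : H × ℝ => ‖z.1‖) P)
    (hA2 : Integrable (fun z : H × ℝ => ‖z.1‖ ^ 2) P)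
    -- risks are well defined on W
    (hInt1 : ∀ w ∈ W, Integrable (fun z : H × ℝ => |z.2 - (inner ℝ z.1 w : ℝ)|) P)
    (hInt2 : ∀ w ∈ W, Integrable (fun z : H × ℝ => (z.2 - (inner ℝ z.1 w : ℝ)) ^ 2) P)
    -- (A3): sup_{w ∈ W} R_{ℓ2}(w) < ∞
    (hA3 : BddAbove (l2Risk P '' W))
    (ε : ℝ) (hε : 0 < ε)
    -- N : an ε-net of W of minimal cardinality N(W, ε)
    (N : Finset H) (hNsub : ↑N ⊆ W)
    (hNnet : ∀ w ∈ W, ∃ v ∈ N, ‖w - v‖ ≤ ε)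
    (hNcard : N.card = coveringNumber W ε)
    (δ : ℝ) (hδ : 0 < δ) (hδ' : δ < 1) :
    ENNReal.ofReal (1 - δ) ≤
      Measure.pi (fun _ : Fin n => P)
        {ω | ∀ wt ∈ N,
          1 / (n * α) * ∑ i, ψ (α * |(ω i).2 - (inner ℝ (ω i).1 wt : ℝ)| - α * ε * ‖(ω i).1‖) ≥
            l1Risk P wt -
              (ε * (∫ z, ‖z.1‖ ∂P) + α * sSup (l2Risk P '' W)
                + α * ε ^ 2 * (∫ z, ‖z.1‖ ^ 2 ∂P)
                + 1 / (n * α) * Real.log ((coveringNumber W ε : ℝ) / δ))} :=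
  truncated_sum_lower_bound_on_net_general P W ψ hψmono hψlb n hn α hα hxInt hA2 hInt1 hInt2 hA3 ε
    hε N hNsub hNcard δ hδ
end
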